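/- (Halting Dichotomy, Lemma 3.4) Let N be an abelian network with total alphabet A, and fix an initial state x.q. Then exactly one of the following holds: (1) there does not exist a finite complete execution for x.q; or (2) every legal execution for x.q is finite (indeed of length at most that of any complete execution), and any two complete legal executions w, w' for x.q satisfy |w| = |w'| in ℕ^A. -/

import Mathlib

/-- The letter-count vector `|w| ∈ ℕ^A` of a word `w ∈ A^*`. -/
def lc {A : Type*} [DecidableEq A] (w : List A) : A → ℕ := fun a => w.count a

/-- An abelian-network *data* structure on a directed graph with vertex set `V`, edge set `E`
(with source and target maps, allowing loops and multiple edges), total alphabet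
`A = ⊔_v A_v` (the letter `a` belongs to the alphabet of the vertex `loc a`), and
state space `Q v` for the processor at vertex `v`.  The abelian hypothesis on the
processors is the separate predicate `AbelianNetwork.IsAbelian`. -/
structure AbelianNetwork (V E A : Type*) (Q : V → Type*) [DecidableEq V] [DecidableEq A] where
  /-- source of an edge -/
  src : E → V
  /-- target of an edge -/
  tgt : E → V
  /-- the vertex whose input alphabet contains the letter `a` -/
  loc : A → V
  /-- the (finitely many) outgoing edges of each vertex -/
  outEdges : V → Finset E
  mem_outEdges : ∀ (e : E) (v : V), e ∈ outEdges v ↔ src e = v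
  /-- single-letter transition function `T_v(a, ·)` of the processor at `v = loc a` -/
  trans : (a : A) → Q (loc a) → Q (loc a)
  /-- message-passing function: the word sent along the edge `e` (with `src e = loc a`)
  when the processor at `loc a` processes the letter `a` in state `q` -/
  msg : (e : E) → (a : A) → Q (loc a) → List A
  /-- letters sent along `e` belong to the alphabet of the target of `e` -/
  msg_tgt : ∀ (e : E) (a : A) (q : Q (loc a)), src e = loc a → ∀ b ∈ msg e a q, loc b = tgt e

namespace AbelianNetwork

variable {V E A : Type*} {Q : V → Type*} [DecidableEq V] [DecidableEq A]
variable (N : AbelianNetwork V E A Q)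

/-- The map `t_a : Q → Q` updating the `loc a` coordinate by `T_{loc a}(a, ·)` and
fixing all other coordinates. -/
def tact (a : A) (q : ∀ v, Q v) : ∀ v, Q v :=
  Function.update q (N.loc a) (N.trans a (q (N.loc a)))

/-- `t_w = t_{w_r} ∘ ⋯ ∘ t_{w_1}` for a word `w = w_1 ⋯ w_r`. -/
def tword (w : List A) (q : ∀ v, Q v) : ∀ v, Q v :=
  w.foldl (fun q a => N.tact a q) q

/-- The word sent along the edge `e` when the letters of `w` are processed in order,
starting from the global state `q`.  (Extends the message-passing functions to words.) -/
def msgword (e : E) : List A → (∀ v, Q v) → List A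
  | [], _ => []
  | a :: w, q =>
      (if N.src e = N.loc a then N.msg e a (q (N.loc a)) else []) ++ msgword e w (N.tact a q)

/-- `N(a, q_{loc a}) ∈ ℕ^A`: the vector counting the letters produced when the processor at
`loc a` processes the letter `a`, summed over the outgoing edges of `loc a`. -/
def Nletter (a : A) (q : ∀ v, Q v) : A → ℕ := fun b =>
  ∑ e ∈ N.outEdges (N.loc a), (N.msg e a (q (N.loc a))).count b

/-- `N(w, q) = ∑_i N(w_i, q^{i-1}_{v(i)})` for a word `w = w_1 ⋯ w_r`. -/
def Nword : List A → (∀ v, Q v) → A → ℕ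
  | [], _ => fun _ => 0
  | a :: w, q => fun b => N.Nletter a q b + Nword w (N.tact a q) b

/-- The network is *abelian*: permuting a word input to a single processor does not change
the resulting state and changes each output word only by permuting its letters. -/
def IsAbelian : Prop :=
  ∀ (v : V) (w w' : List A), (∀ a ∈ w, N.loc a = v) → (∀ a ∈ w', N.loc a = v) →
    (w : Multiset A) = (w' : Multiset A) →
    ∀ q : ∀ u, Q u,
      N.tword w q = N.tword w' q ∧
      ∀ e : E, ((N.msgword e w q : Multiset A) = (N.msgword e w' q : Multiset A))

/-- The state transition `π_a(x.q) = (x - 1_a + N(a, q_{loc a})).t_a(q)` of the whole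
network, viewed as a single automaton with states `x.q ∈ ℤ^A × Q`. -/
def piLetter (a : A) (s : (A → ℤ) × (∀ v, Q v)) : (A → ℤ) × (∀ v, Q v) :=
  (fun b => s.1 b - (if b = a then 1 else 0) + (N.Nletter a s.2 b : ℤ), N.tact a s.2)

/-- `π_w = π_{w_r} ∘ ⋯ ∘ π_{w_1}`. -/
def piWord (w : List A) (s : (A → ℤ) × (∀ v, Q v)) : (A → ℤ) × (∀ v, Q v) :=
  w.foldl (fun s a => N.piLetter a s) s

/-- The word `w` is a *legal execution* from `x.q`: each letter is a legal move
(`x_a ≥ 1`) from the state obtained by executing the previous letters. -/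
def Legal : List A → ((A → ℤ) × (∀ v, Q v)) → Prop
  | [], _ => True
  | a :: w, s => 1 ≤ s.1 a ∧ Legal w (N.piLetter a s)

/-- The word `w` is a *complete execution* from `x.q`: after executing `w`,
no letters remain to be processed. -/
def Complete (w : List A) (s : (A → ℤ) × (∀ v, Q v)) : Prop :=
  ∀ a : A, (N.piWord w s).1 a ≤ 0

/-- A canonical word with letter-count vector `u ∈ ℕ^A`. -/
noncomputable def vecWord [Fintype A] (u : A → ℕ) : List A :=
  (Finset.univ : Finset A).toList.flatMap fun a => List.replicate (u a) a

/-- `N(u, q)` for a vector `u ∈ ℕ^A`, defined as `N(w, q)` for a word `w` with `|w| = u`. -/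
noncomputable def Nvec [Fintype A] (u : A → ℕ) (q : ∀ v, Q v) : A → ℕ := N.Nword (vecWord u) q

end AbelianNetwork

/-! Executions of an abelian network commute: by the abelian property, `π_a ∘ π_b = π_b ∘ π_a`
for all letters `a, b`, so `π_w` depends only on `|w|`. A legal move `a` from `x.q` has
`x_a ≥ 1`, and letters are only ever removed by processing them, so every complete execution
must contain `a`; processing it first and inducting shows that every legal execution is a
sub-multiset of every complete one. Comparing two complete legal executions both ways gives
`|w| = |w'|`. -/

namespace AbelianNetwork

variable {V E A : Type*} {Q : V → Type*} [DecidableEq V] [DecidableEq A]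
variable (N : AbelianNetwork V E A Q)

lemma piWord_cons (a : A) (w : List A) (s : (A → ℤ) × (∀ v, Q v)) :
    N.piWord (a :: w) s = N.piWord w (N.piLetter a s) := rfl

lemma Nletter_tact_of_loc_ne {a b : A} (h : N.loc a ≠ N.loc b) (q : ∀ v, Q v) :
    N.Nletter a (N.tact b q) = N.Nletter a q := by
  unfold Nletter
  rw [tact, Function.update_of_ne h]

lemma tact_comm_of_loc_ne {a b : A} (h : N.loc a ≠ N.loc b) (q : ∀ v, Q v) :
    N.tact a (N.tact b q) = N.tact b (N.tact a q) := by
  simp only [tact, Function.update_of_ne h, Function.update_of_ne (Ne.symm h)]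
  exact Function.update_comm (Ne.symm h) _ _ _

lemma Nword_eq_sum_count_msgword {v : V} {w : List A} (hw : ∀ a ∈ w, N.loc a = v)
    (q : ∀ v, Q v) (b : A) :
    N.Nword w q b = ∑ e ∈ N.outEdges v, (N.msgword e w q).count b := by
  induction w generalizing q with
  | nil => simp [Nword, msgword]
  | cons a w ih =>
    obtain ⟨rfl, hw⟩ := List.forall_mem_cons.1 hw
    have hsrc : ∀ e ∈ N.outEdges (N.loc a), N.src e = N.loc a :=
      fun e he => (N.mem_outEdges e _).1 he
    simp only [Nword, Nletter, msgword, ih hw, ← Finset.sum_add_distrib]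
    exact Finset.sum_congr rfl fun e he => by rw [if_pos (hsrc e he), List.count_append]

lemma sub_count_le_piWord_fst (w : List A) (s : (A → ℤ) × (∀ v, Q v)) (b : A) :
    s.1 b - w.count b ≤ (N.piWord w s).1 b := by
  induction w generalizing s with
  | nil => simp [piWord]
  | cons a w ih =>
    have h : (N.piLetter a s).1 b - w.count b ≤ (N.piWord w (N.piLetter a s)).1 b :=
      ih (N.piLetter a s)
    have hN : (0 : ℤ) ≤ N.Nletter a s.2 b := Int.natCast_nonneg _
    rw [piWord_cons]
    by_cases hba : b = a
    · subst hba
      simp only [piLetter, if_pos, List.count_cons_self] at h ⊢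
      push_cast
      linarith
    · simp only [piLetter, if_neg hba, List.count_cons_of_ne (Ne.symm hba)] at h ⊢
      linarith

lemma mem_of_complete {w : List A} {s : (A → ℤ) × (∀ v, Q v)} {a : A} (ha : 1 ≤ s.1 a)
    (hw : N.Complete w s) : a ∈ w := by
  have h := N.sub_count_le_piWord_fst w s a
  have := hw a
  exact List.count_pos_iff.1 (by omega)

variable {N}

lemma IsAbelian.tact_comm (hN : N.IsAbelian) (a b : A) (q : ∀ v, Q v) :
    N.tact a (N.tact b q) = N.tact b (N.tact a q) := by
  by_cases h : N.loc a = N.loc b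
  · exact (hN (N.loc a) [b, a] [a, b] (by simp [h]) (by simp [h])
      (Multiset.coe_eq_coe.2 (List.Perm.swap a b [])) q).1
  · exact N.tact_comm_of_loc_ne h q

lemma IsAbelian.Nword_pair_comm (hN : N.IsAbelian) (a b : A) (q : ∀ v, Q v) :
    N.Nword [a, b] q = N.Nword [b, a] q := by
  funext c
  by_cases h : N.loc a = N.loc b
  · have hab : ∀ d ∈ [a, b], N.loc d = N.loc a := by simp [h]
    have hba : ∀ d ∈ [b, a], N.loc d = N.loc a := by simp [h]
    have hmsg := (hN (N.loc a) [a, b] [b, a] hab hba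
      (Multiset.coe_eq_coe.2 (List.Perm.swap b a [])) q).2
    rw [N.Nword_eq_sum_count_msgword hab, N.Nword_eq_sum_count_msgword hba]
    exact Finset.sum_congr rfl fun e _ => by
      simpa only [Multiset.coe_count] using congrArg (Multiset.count c) (hmsg e)
  · simp only [Nword, N.Nletter_tact_of_loc_ne h, N.Nletter_tact_of_loc_ne (Ne.symm h)]
    omega

lemma IsAbelian.piLetter_comm (hN : N.IsAbelian) (a b : A) (s : (A → ℤ) × (∀ v, Q v)) :
    N.piLetter a (N.piLetter b s) = N.piLetter b (N.piLetter a s) := by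
  refine Prod.ext (funext fun c => ?_) (hN.tact_comm a b s.2)
  have h := congrFun (hN.Nword_pair_comm b a s.2) c
  simp only [Nword, add_zero] at h
  simp only [piLetter]
  linarith [congrArg (Nat.cast : ℕ → ℤ) h]

lemma IsAbelian.piWord_eq_of_perm (hN : N.IsAbelian) {w w' : List A} (h : w.Perm w')
    (s : (A → ℤ) × (∀ v, Q v)) : N.piWord w s = N.piWord w' s := by
  induction h generalizing s with
  | nil => rfl
  | cons a _ ih => exact ih _
  | swap a b l => exact congrArg (N.piWord l) (hN.piLetter_comm a b s)
  | trans _ _ ih₁ ih₂ => exact (ih₁ s).trans (ih₂ s)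

lemma IsAbelian.complete_erase (hN : N.IsAbelian) {w : List A} {s : (A → ℤ) × (∀ v, Q v)}
    {a : A} (ha : a ∈ w) (hw : N.Complete w s) : N.Complete (w.erase a) (N.piLetter a s) := by
  intro b
  simpa only [Complete, hN.piWord_eq_of_perm (List.perm_cons_erase ha), piWord_cons] using hw b

lemma IsAbelian.subperm_of_legal_of_complete (hN : N.IsAbelian) {w w' : List A}
    {s : (A → ℤ) × (∀ v, Q v)} (hw : N.Legal w s) (hw' : N.Complete w' s) : w.Subperm w' := by
  induction w generalizing w' s with
  | nil => exact List.nil_subperm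
  | cons a w ih =>
    obtain ⟨ha, hw⟩ := hw
    have ha' := N.mem_of_complete ha hw'
    exact ((List.subperm_cons a).2 (ih hw (hN.complete_erase ha' hw'))).trans
      (List.perm_cons_erase ha').symm.subperm

end AbelianNetwork

/-- **Halting Dichotomy (Lemma 3.4).** For an abelian network with initial state `x.q`,
exactly one of the following holds: (1) there is no finite complete execution for `x.q`;
or (2) a complete execution exists, every legal execution has length at most that of any
complete execution, and any two complete legal executions `w, w'` satisfy `|w| = |w'|`. -/
theorem AbelianNetwork.halting_dichotomy {V E A : Type*} {Q : V → Type*}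
    [DecidableEq V] [DecidableEq A] (N : AbelianNetwork V E A Q) (hN : N.IsAbelian)
    (x : A → ℤ) (q : ∀ v, Q v) :
    Xor'
      (¬ ∃ w : List A, N.Complete w (x, q))
      ((∃ w : List A, N.Complete w (x, q)) ∧
        (∀ w w' : List A, N.Legal w (x, q) → N.Complete w' (x, q) →
          w.length ≤ w'.length) ∧
        (∀ w w' : List A, N.Legal w (x, q) → N.Complete w (x, q) →
          N.Legal w' (x, q) → N.Complete w' (x, q) → lc w = lc w')) := by
  by_cases hP : ∃ w : List A, N.Complete w (x, q)
  · refine Or.inr ⟨⟨hP, fun w w' hw hw' => ?_, fun w w' hw hcw hw' hcw' => ?_⟩, not_not.2 hP⟩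
    · exact (hN.subperm_of_legal_of_complete hw hw').length_le
    · have hperm := (hN.subperm_of_legal_of_complete hw hcw').antisymm
        (hN.subperm_of_legal_of_complete hw' hcw)
      exact funext hperm.count_eq
  · exact Or.inl ⟨hP, fun h => hP h.1⟩
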